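/- Let 0<p<∞, φ∈𝒢_p(𝔻), φ(1)=1, sup_k φ(2^k)=∞. Then m_{φ,p}(ℤ^d) is separable if, and only if, lim_{k→∞} 2^{−kd/p}φ(2^k) > 0 (equivalently m_{φ,p}=ℓ_p). In particular, if the limit is 0 then m_{φ,p}(ℤ^d) contains an uncountable family of elements with pairwise distances at least 1. -/

import Mathlib

open ENNReal Filter

noncomputable section

/-- `Q_{0,k} ⊂ Q_{-j,m}` for dyadic cubes `Q_{-j,m} = 2^j([0,1)^d + m)`. -/
def inCube (d j : ℕ) (m k : Fin d → ℤ) : Prop :=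
  ∀ i, 2 ^ j * m i ≤ k i ∧ k i < 2 ^ j * (m i + 1)

/-- the local quantity `(Σ_{k : Q_{0,k} ⊂ Q_{-j,m}} |λ_k|^p)^{1/p}`, in `ℝ≥0∞`. -/
def localSum (d : ℕ) (p : ℝ) (j : ℕ) (m : Fin d → ℤ)
    (lam : (Fin d → ℤ) → ℂ) : ℝ≥0∞ :=
  (∑' k : {k : Fin d → ℤ // inCube d j m k}, ENNReal.ofReal ‖lam k.1‖ ^ p) ^ (1 / p)

/-- quasi-norm of the generalised Morrey sequence space `m_{φ,p}(ℤ^d)`;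
`φ j` stands for `φ(2^j)`. -/
def mNorm (d : ℕ) (p : ℝ) (φ : ℕ → ℝ) (lam : (Fin d → ℤ) → ℂ) : ℝ≥0∞ :=
  ⨆ (j : ℕ) (m : Fin d → ℤ),
    ENNReal.ofReal (φ j) * (2 : ℝ≥0∞) ^ (-((j : ℝ) * d) / p) * localSum d p j m lam

def ellpNorm (d : ℕ) (p : ℝ) (lam : (Fin d → ℤ) → ℂ) : ℝ≥0∞ :=
  (∑' k : Fin d → ℤ, ENNReal.ofReal ‖lam k‖ ^ p) ^ (1 / p)

def linftyNorm (d : ℕ) (lam : (Fin d → ℤ) → ℂ) : ℝ≥0∞ :=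
  ⨆ k : Fin d → ℤ, ENNReal.ofReal ‖lam k‖

/-- the class `𝒢_p(𝔻)`: `φ(2^k)` is positive, nondecreasing and
`2^{-kd/p} φ(2^k)` is nonincreasing. -/
def Gp (d : ℕ) (p : ℝ) (φ : ℕ → ℝ) : Prop :=
  (∀ k, 0 < φ k) ∧
  ∀ j k : ℕ, j ≤ k → φ j ≤ φ k ∧ φ k ≤ φ j * 2 ^ (((k : ℝ) - j) * d / p)

/-!
Put `w j = φ(2^j) 2^{-jd/p}`. By `𝒢_p` the weight `w` is nonincreasing with `w 0 = 1`, so either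
`w ≥ c > 0` or `w → 0`.

If `w ≥ c`, the quasi-norm bounds every local sum uniformly; covering a finite set by the `2^d`
dyadic cubes of a large level that touch the origin bounds the `ℓ_p` sum, and finitely supported
sequences with values in a countable dense subset of `ℂ` are then dense in `ℓ_p`, hence in
`m_{φ,p}`.

If `w → 0`, pick `J 0 < J 1 < ⋯` with `w (J n) ^ p ≤ 1 / (n + 1)` and put unit masses at the
diagonal points `2^{J n} (1, …, 1)`. A dyadic cube of side `2^j` contains at most one of them with
`J n ≥ j` (it must be the corner of the cube), and the others number at most `w j ^ (-p)`, so every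
weighted local sum is at most `2^{1/p}`. Indicators of subsets of these points form an uncountable
family that is `1`-separated already in the sup norm, which the quasi-norm dominates; no countable
set approximates all of them within `1/2`.
-/

def morreyWeight (d : ℕ) (p : ℝ) (φ : ℕ → ℝ) (j : ℕ) : ℝ := φ j * 2 ^ (-((j : ℝ) * d) / p)

section Weight

variable {d : ℕ} {p : ℝ} {φ : ℕ → ℝ}

lemma Gp.morreyWeight_pos (hGp : Gp d p φ) (j : ℕ) : 0 < morreyWeight d p φ j :=
  mul_pos (hGp.1 j) (Real.rpow_pos_of_pos two_pos _)

lemma Gp.antitone_morreyWeight (hGp : Gp d p φ) : Antitone (morreyWeight d p φ) := by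
  intro j k hjk
  calc morreyWeight d p φ k
      ≤ φ j * 2 ^ (((k : ℝ) - j) * d / p) * 2 ^ (-((k : ℝ) * d) / p) :=
        mul_le_mul_of_nonneg_right (hGp.2 j k hjk).2 (Real.rpow_nonneg zero_le_two _)
    _ = morreyWeight d p φ j := by
        rw [mul_assoc, ← Real.rpow_add two_pos, morreyWeight]
        ring_nf

lemma Gp.morreyWeight_le_one (hGp : Gp d p φ) (hφ1 : φ 0 = 1) (j : ℕ) :
    morreyWeight d p φ j ≤ 1 :=
  (hGp.antitone_morreyWeight j.zero_le).trans_eq (by simp [morreyWeight, hφ1])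

lemma mNorm_eq_iSup_morreyWeight (hGp : Gp d p φ) (lam : (Fin d → ℤ) → ℂ) :
    mNorm d p φ lam =
      ⨆ (j : ℕ) (m : Fin d → ℤ), ENNReal.ofReal (morreyWeight d p φ j) * localSum d p j m lam := by
  simp only [mNorm, morreyWeight, ENNReal.ofReal_mul (hGp.1 _).le,
    ← ENNReal.ofReal_rpow_of_pos two_pos, ENNReal.ofReal_ofNat]

lemma Antitone.exists_pos_le_or_tendsto_zero {w : ℕ → ℝ} (hw : Antitone w) (h0 : ∀ k, 0 ≤ w k) :
    (∃ c, 0 < c ∧ ∀ k, c ≤ w k) ∨ Tendsto w atTop (nhds 0) := by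
  have hbdd : BddBelow (Set.range w) := ⟨0, Set.forall_mem_range.2 h0⟩
  rcases (le_ciInf h0).eq_or_lt with h | h
  · exact Or.inr (h ▸ tendsto_atTop_ciInf hw hbdd)
  · exact Or.inl ⟨_, h, fun k => ciInf_le hbdd k⟩

end Weight

section LocalSum

variable {d : ℕ} {p : ℝ} {φ : ℕ → ℝ}

lemma inCube_zero_iff {m k : Fin d → ℤ} : inCube d 0 m k ↔ k = m := by
  simp only [inCube, pow_zero, one_mul, Int.lt_add_one_iff, ← le_antisymm_iff, funext_iff, eq_comm]

lemma localSum_zero (hp : p ≠ 0) (m : Fin d → ℤ) (lam : (Fin d → ℤ) → ℂ) :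
    localSum d p 0 m lam = ENNReal.ofReal ‖lam m‖ := by
  have hunique : ∀ k : {k // inCube d 0 m k}, k = ⟨m, inCube_zero_iff.2 rfl⟩ :=
    fun k => Subtype.ext (inCube_zero_iff.1 k.2)
  rw [localSum, tsum_eq_single _ fun k hk => absurd (hunique k) hk, one_div,
    ENNReal.rpow_rpow_inv hp]

lemma localSum_mono (hp : 0 ≤ p) {lam mu : (Fin d → ℤ) → ℂ} (h : ∀ k, ‖lam k‖ ≤ ‖mu k‖)
    (j : ℕ) (m : Fin d → ℤ) : localSum d p j m lam ≤ localSum d p j m mu := by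
  unfold localSum
  gcongr with k
  exact h k

lemma localSum_le_ellpNorm (hp : 0 ≤ p) (j : ℕ) (m : Fin d → ℤ) (lam : (Fin d → ℤ) → ℂ) :
    localSum d p j m lam ≤ ellpNorm d p lam := by
  unfold localSum ellpNorm
  gcongr
  exact ENNReal.tsum_comp_le_tsum_of_injective Subtype.val_injective _

lemma mNorm_mono (hp : 0 ≤ p) {lam mu : (Fin d → ℤ) → ℂ} (h : ∀ k, ‖lam k‖ ≤ ‖mu k‖) :
    mNorm d p φ lam ≤ mNorm d p φ mu := by
  unfold mNorm
  gcongr with j m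
  exact localSum_mono hp h j m

lemma linftyNorm_le_mNorm (hp : p ≠ 0) (hφ1 : φ 0 = 1) (lam : (Fin d → ℤ) → ℂ) :
    linftyNorm d lam ≤ mNorm d p φ lam :=
  iSup_le fun k => le_iSup₂_of_le (f := fun j m =>
      ENNReal.ofReal (φ j) * (2 : ℝ≥0∞) ^ (-((j : ℝ) * d) / p) * localSum d p j m lam) 0 k
    (by simp [localSum_zero hp, hφ1])

lemma mNorm_le_ellpNorm (hp : 0 ≤ p) (hGp : Gp d p φ) (hφ1 : φ 0 = 1)
    (lam : (Fin d → ℤ) → ℂ) : mNorm d p φ lam ≤ ellpNorm d p lam := by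
  rw [mNorm_eq_iSup_morreyWeight hGp]
  refine iSup₂_le fun j m => ?_
  calc ENNReal.ofReal (morreyWeight d p φ j) * localSum d p j m lam
      ≤ 1 * ellpNorm d p lam := by
        gcongr
        · exact ENNReal.ofReal_le_one.2 (hGp.morreyWeight_le_one hφ1 j)
        · exact localSum_le_ellpNorm hp j m lam
    _ = ellpNorm d p lam := one_mul _

lemma linftyNorm_sub_comm (lam mu : (Fin d → ℤ) → ℂ) :
    linftyNorm d (lam - mu) = linftyNorm d (mu - lam) := by
  simp only [linftyNorm, Pi.sub_apply, norm_sub_rev]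

lemma linftyNorm_sub_le_linftyNorm_sub_add_linftyNorm_sub (lam mu nu : (Fin d → ℤ) → ℂ) :
    linftyNorm d (lam - nu) ≤ linftyNorm d (lam - mu) + linftyNorm d (mu - nu) :=
  iSup_le fun k =>
    calc ENNReal.ofReal ‖lam k - nu k‖
        ≤ ENNReal.ofReal ‖lam k - mu k‖ + ENNReal.ofReal ‖mu k - nu k‖ :=
          (ENNReal.ofReal_le_ofReal (norm_sub_le_norm_sub_add_norm_sub _ _ _)).trans
            ENNReal.ofReal_add_le
      _ ≤ _ := add_le_add (le_iSup (fun k => ENNReal.ofReal ‖(lam - mu) k‖) k)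
            (le_iSup (fun k => ENNReal.ofReal ‖(mu - nu) k‖) k)

end LocalSum

section LpControl

variable {d : ℕ} {p : ℝ} {φ : ℕ → ℝ}

def orthant (k : Fin d → ℤ) : Fin d → Bool := fun i => decide (0 ≤ k i)

def orthantCube (b : Fin d → Bool) : Fin d → ℤ := fun i => if b i then 0 else -1

lemma inCube_orthantCube {j : ℕ} {k : Fin d → ℤ} (hk : ∀ i, |k i| < 2 ^ j) :
    inCube d j (orthantCube (orthant k)) k := by
  intro i
  have := abs_lt.1 (hk i)
  by_cases h : 0 ≤ k i <;> simp [orthantCube, orthant, h] <;> omega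

lemma exists_abs_lt_two_pow (s : Finset (Fin d → ℤ)) :
    ∃ j : ℕ, ∀ k ∈ s, ∀ i, |k i| < 2 ^ j := by
  obtain ⟨j, hj⟩ := pow_unbounded_of_one_lt (∑ k ∈ s, ∑ i, |k i|) one_lt_two
  refine ⟨j, fun k hk i => lt_of_le_of_lt ?_ hj⟩
  calc |k i| ≤ ∑ i, |k i| := Finset.single_le_sum (fun i _ => abs_nonneg (k i)) (Finset.mem_univ i)
    _ ≤ ∑ k ∈ s, ∑ i, |k i| :=
      Finset.single_le_sum (f := fun k => ∑ i, |k i|)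
        (fun k _ => Finset.sum_nonneg fun i _ => abs_nonneg (k i)) hk

lemma tsum_rpow_le_of_localSum_le (hp : 0 < p) {lam : (Fin d → ℤ) → ℂ} {C : ℝ≥0∞}
    (hC : ∀ j m, localSum d p j m lam ≤ C) :
    ∑' k, ENNReal.ofReal ‖lam k‖ ^ p ≤ 2 ^ d * C ^ p := by
  classical
  rw [ENNReal.tsum_eq_iSup_sum]
  refine iSup_le fun s => ?_
  obtain ⟨j, hj⟩ := exists_abs_lt_two_pow s
  have hcube : ∀ b, ∑ k ∈ s with orthant k = b, ENNReal.ofReal ‖lam k‖ ^ p ≤ C ^ p := fun b =>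
    calc ∑ k ∈ s with orthant k = b, ENNReal.ofReal ‖lam k‖ ^ p
        ≤ ∑' k : {k // inCube d j (orthantCube b) k}, ENNReal.ofReal ‖lam k‖ ^ p := by
          rw [← Finset.sum_subtype_of_mem (p := fun k => inCube d j (orthantCube b) k) _
            fun k hk => ?_]
          · exact ENNReal.sum_le_tsum _
          · obtain ⟨hks, rfl⟩ := Finset.mem_filter.1 hk
            exact inCube_orthantCube (hj k hks)
      _ = localSum d p j (orthantCube b) lam ^ p := by
          rw [localSum, one_div, ENNReal.rpow_inv_rpow hp.ne']
      _ ≤ C ^ p := by gcongr; exact hC j _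
  calc ∑ k ∈ s, ENNReal.ofReal ‖lam k‖ ^ p
      = ∑ b, ∑ k ∈ s with orthant k = b, ENNReal.ofReal ‖lam k‖ ^ p :=
        (Finset.sum_fiberwise s orthant _).symm
    _ ≤ ∑ _b : Fin d → Bool, C ^ p := Finset.sum_le_sum fun b _ => hcube b
    _ = 2 ^ d * C ^ p := by simp

lemma tsum_rpow_ne_top_of_mNorm_ne_top (hp : 0 < p)
    (hGp : Gp d p φ) {c : ℝ} (hc : 0 < c) (hcw : ∀ k, c ≤ morreyWeight d p φ k)
    {lam : (Fin d → ℤ) → ℂ} (hm : mNorm d p φ lam ≠ ⊤) :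
    ∑' k, ENNReal.ofReal ‖lam k‖ ^ p ≠ ⊤ := by
  have hc' : ENNReal.ofReal c ≠ 0 := by simpa using hc
  have hC : ∀ j m, localSum d p j m lam ≤ mNorm d p φ lam / ENNReal.ofReal c := fun j m => by
    rw [ENNReal.le_div_iff_mul_le (Or.inl hc') (Or.inl ENNReal.ofReal_ne_top), mul_comm]
    calc ENNReal.ofReal c * localSum d p j m lam
        ≤ ENNReal.ofReal (morreyWeight d p φ j) * localSum d p j m lam := by
          gcongr; exact hcw j
      _ ≤ mNorm d p φ lam := by
          rw [mNorm_eq_iSup_morreyWeight hGp]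
          exact le_iSup₂ (f := fun j m =>
            ENNReal.ofReal (morreyWeight d p φ j) * localSum d p j m lam) j m
  refine ne_top_of_le_ne_top ?_ (tsum_rpow_le_of_localSum_le hp hC)
  exact ENNReal.mul_ne_top (by simp)
    (ENNReal.rpow_ne_top_of_nonneg hp.le (ENNReal.div_ne_top hm hc'))

end LpControl

section Approximation

open TopologicalSpace

lemma exists_countable_approx_finitelySupported (ι E : Type*) [Countable ι] [TopologicalSpace E]
    [SeparableSpace E] [Zero E] :
    ∃ S : Set (ι → E), S.Countable ∧ ∀ (F : Finset ι) (U : ι → Set E),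
      (∀ i ∈ F, IsOpen (U i) ∧ (U i).Nonempty) →
        ∃ s ∈ S, (∀ i ∈ F, s i ∈ U i) ∧ ∀ i ∉ F, s i = 0 := by
  classical
  obtain ⟨u, hu⟩ := exists_dense_seq E
  refine ⟨⋃ F : Finset ι, Set.range fun n : F → ℕ =>
      fun i => if h : i ∈ F then u (n ⟨i, h⟩) else 0,
    Set.countable_iUnion fun F => Set.countable_range _, fun F U hU => ?_⟩
  choose n hn using fun i : F => hu.exists_mem_open (hU i i.2).1 (hU i i.2).2
  refine ⟨_, Set.mem_iUnion.2 ⟨F, n, rfl⟩, fun i hi => ?_, fun i hi => dif_neg hi⟩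
  simpa [dif_pos hi] using hn ⟨i, hi⟩

lemma exists_countable_dense_of_tsum_rpow (ι E : Type*) [Countable ι] [SeminormedAddCommGroup E]
    [SeparableSpace E] {p : ℝ} (hp : 0 < p) :
    ∃ S : Set (ι → E), S.Countable ∧ ∀ f : ι → E, ∑' i, ENNReal.ofReal ‖f i‖ ^ p ≠ ⊤ →
      ∀ δ : ℝ≥0∞, 0 < δ → ∃ s ∈ S, ∑' i, ENNReal.ofReal ‖(f - s) i‖ ^ p < δ := by
  obtain ⟨S, hSc, hS⟩ := exists_countable_approx_finitelySupported ι E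
  refine ⟨S, hSc, fun f hf δ hδ => ?_⟩
  obtain ⟨F, hF⟩ := ((ENNReal.tendsto_tsum_compl_atTop_zero hf).eventually
    (gt_mem_nhds (ENNReal.half_pos hδ.ne'))).exists
  set γ := δ / 2 / F.card
  have hγ : 0 < γ := ENNReal.div_pos (ENNReal.half_pos hδ.ne').ne' (ENNReal.natCast_ne_top _)
  have hcont (i : ι) : Continuous fun x : E => ENNReal.ofReal ‖f i - x‖ ^ p :=
    ENNReal.continuous_rpow_const.comp
      (ENNReal.continuous_ofReal.comp (continuous_const.sub continuous_id).norm)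
  obtain ⟨s, hsS, hsF, hs0⟩ := hS F (fun i => {x | ENNReal.ofReal ‖f i - x‖ ^ p < γ})
    fun i _ => ⟨isOpen_lt (hcont i) continuous_const, f i, by
      rwa [Set.mem_ofPred_eq, sub_self, norm_zero, ENNReal.ofReal_zero,
        ENNReal.zero_rpow_of_pos hp]⟩
  refine ⟨s, hsS, ?_⟩
  rw [← ENNReal.sum_add_tsum_compl F, ← ENNReal.add_halves δ]
  refine ENNReal.add_lt_add_of_le_of_lt
    (ENNReal.sum_ne_top.2 fun i hi => (hsF i hi).ne_top) ?_ (lt_of_eq_of_lt ?_ hF)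
  · calc ∑ i ∈ F, ENNReal.ofReal ‖(f - s) i‖ ^ p ≤ F.card * γ := by
          simpa using Finset.sum_le_card_nsmul F _ γ fun i hi => (hsF i hi).le
      _ ≤ δ / 2 := ENNReal.mul_div_le
  · exact tsum_congr fun i => by simp [hs0 i i.2]

end Approximation

def MorreySeparable (d : ℕ) (p : ℝ) (φ : ℕ → ℝ) : Prop :=
  ∃ S : Set ((Fin d → ℤ) → ℂ), S.Countable ∧
    ∀ lam : (Fin d → ℤ) → ℂ, mNorm d p φ lam < ⊤ →
      ∀ ε : ℝ≥0∞, 0 < ε → ∃ s ∈ S, mNorm d p φ (lam - s) < ε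

section Separability

variable {d : ℕ} {p : ℝ} {φ : ℕ → ℝ}

lemma morreySeparable_of_le_morreyWeight (hp : 0 < p) (hGp : Gp d p φ) (hφ1 : φ 0 = 1)
    {c : ℝ} (hc : 0 < c) (hcw : ∀ k, c ≤ morreyWeight d p φ k) : MorreySeparable d p φ := by
  obtain ⟨S, hSc, hS⟩ := exists_countable_dense_of_tsum_rpow (Fin d → ℤ) ℂ hp
  refine ⟨S, hSc, fun lam hm ε hε => ?_⟩
  have hroot : Tendsto (fun x : ℝ≥0∞ => x ^ (1 / p)) (nhds 0) (nhds 0) := by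
    have := (ENNReal.continuous_rpow_const (y := 1 / p)).tendsto 0
    rwa [ENNReal.zero_rpow_of_pos (one_div_pos.2 hp)] at this
  obtain ⟨δ, hδ, hδε⟩ :=
    ENNReal.nhds_zero_basis.eventually_iff.1 (hroot.eventually (gt_mem_nhds hε))
  obtain ⟨s, hsS, hs⟩ := hS lam (tsum_rpow_ne_top_of_mNorm_ne_top hp hGp hc hcw hm.ne) δ hδ
  exact ⟨s, hsS, (mNorm_le_ellpNorm hp.le hGp hφ1 _).trans_lt (hδε hs)⟩

lemma not_morreySeparable_of_separated (hp : p ≠ 0) (hφ1 : φ 0 = 1)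
    {F : Set ((Fin d → ℤ) → ℂ)} (hF : ¬ F.Countable) (hfin : ∀ lam ∈ F, mNorm d p φ lam < ⊤)
    (hsep : F.Pairwise fun lam mu => 1 ≤ linftyNorm d (lam - mu)) : ¬ MorreySeparable d p φ := by
  rintro ⟨S, hSc, hS⟩
  choose s hsS hs using fun lam : F => hS lam (hfin lam lam.2) 2⁻¹ (by simp)
  have hinj : Function.Injective fun lam : F => (⟨s lam, hsS lam⟩ : S) := by
    intro lam mu hlm
    by_contra hne
    have hsub : linftyNorm d (lam.1 - mu.1) < 1 :=
      calc linftyNorm d (lam.1 - mu.1)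
          ≤ linftyNorm d (lam.1 - s lam) + linftyNorm d (s lam - mu.1) :=
            linftyNorm_sub_le_linftyNorm_sub_add_linftyNorm_sub _ _ _
        _ < 2⁻¹ + 2⁻¹ := by
            refine ENNReal.add_lt_add ((linftyNorm_le_mNorm hp hφ1 _).trans_lt (hs lam)) ?_
            rw [linftyNorm_sub_comm, show s lam = s mu from congrArg Subtype.val hlm]
            exact (linftyNorm_le_mNorm hp hφ1 _).trans_lt (hs mu)
        _ = 1 := ENNReal.inv_two_add_inv_two
    exact (hsep lam.2 mu.2 (Subtype.coe_injective.ne hne)).not_gt hsub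
  have := hSc.to_subtype
  exact hF (Set.countable_coe_iff.1 hinj.countable)

end Separability

section SparseSets

variable {d : ℕ} {p : ℝ} {φ : ℕ → ℝ}

lemma Int.eq_mul_of_dvd_of_le_of_lt {a k m : ℤ} (ha : 0 < a) (hk : a ∣ k) (h₁ : a * m ≤ k)
    (h₂ : k < a * (m + 1)) : k = a * m := by
  obtain ⟨t, rfl⟩ := hk
  have := le_of_mul_le_mul_left h₁ ha
  have := lt_of_mul_lt_mul_left h₂ ha.le
  rw [show t = m by omega]

lemma setOf_inCube_two_pow_subsingleton (hd : 0 < d) (j : ℕ) (m : Fin d → ℤ) :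
    {i : ℕ | j ≤ i ∧ inCube d j m fun _ => 2 ^ i}.Subsingleton := by
  have hcorner : ∀ i ∈ {i : ℕ | j ≤ i ∧ inCube d j m fun _ => 2 ^ i},
      (2 : ℤ) ^ i = 2 ^ j * m ⟨0, hd⟩ := fun i ⟨hji, hi⟩ =>
    Int.eq_mul_of_dvd_of_le_of_lt (by positivity) (pow_dvd_pow 2 hji) (hi ⟨0, hd⟩).1 (hi ⟨0, hd⟩).2
  intro i hi i' hi'
  exact Nat.pow_right_injective le_rfl
    (by exact_mod_cast (hcorner i hi).trans (hcorner i' hi').symm)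

lemma localSum_indicator_one (hp : 0 < p) (X : Set (Fin d → ℤ)) (j : ℕ) (m : Fin d → ℤ) :
    localSum d p j m (X.indicator 1) = ((X ∩ {k | inCube d j m k}).encard : ℝ≥0∞) ^ (1 / p) := by
  have hterm : ∀ k, ENNReal.ofReal ‖X.indicator (1 : (Fin d → ℤ) → ℂ) k‖ ^ p = X.indicator 1 k := by
    intro k
    by_cases hk : k ∈ X <;> simp [hk, ENNReal.zero_rpow_of_pos hp]
  rw [localSum, tsum_congr fun k : {k // inCube d j m k} => hterm k.1]
  congr 1
  calc ∑' k : {k // inCube d j m k}, X.indicator (1 : (Fin d → ℤ) → ℝ≥0∞) k.1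
      = ∑' k, {k | inCube d j m k}.indicator (X.indicator 1) k := tsum_subtype _ _
    _ = ∑' k, (X ∩ {k | inCube d j m k}).indicator 1 k := by
        rw [Set.indicator_indicator, Set.inter_comm]
    _ = ∑' _ : ↥(X ∩ {k | inCube d j m k}), (1 : ℝ≥0∞) := (tsum_subtype _ _).symm
    _ = _ := ENNReal.tsum_set_one _

lemma one_le_linftyNorm_indicator_sub {X Y : Set (Fin d → ℤ)} (h : X ≠ Y) :
    1 ≤ linftyNorm d (X.indicator 1 - Y.indicator 1) := by
  obtain ⟨k, hk⟩ : ∃ k, ¬(k ∈ X ↔ k ∈ Y) := by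
    by_contra! h'
    exact h (Set.ext h')
  refine le_iSup_of_le k ?_
  by_cases hX : k ∈ X <;> by_cases hY : k ∈ Y <;> simp_all

lemma Antitone.mul_card_filter_lt_le_one {v : ℕ → ℝ≥0∞} (hv : Antitone v) {J : ℕ → ℕ}
    (hJv : ∀ n, v (J n) ≤ ((n : ℝ≥0∞) + 1)⁻¹) (j : ℕ) :
    v j * ((Finset.range j).filter fun n => J n < j).card ≤ 1 := by
  set T := (Finset.range j).filter fun n => J n < j
  rcases T.eq_empty_or_nonempty with h | h
  · simp [h]
  set b := T.max' h
  have hJb : J b < j := (Finset.mem_filter.1 (T.max'_mem h)).2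
  have hTb : T.card ≤ b + 1 := by
    simpa using Finset.card_le_card fun n hn =>
      Finset.mem_range.2 (Nat.lt_succ_of_le (T.le_max' n hn))
  calc v j * T.card ≤ ((b : ℝ≥0∞) + 1)⁻¹ * ((b : ℝ≥0∞) + 1) := by
        gcongr
        · exact (hv hJb.le).trans (hJv b)
        · exact_mod_cast hTb
    _ = 1 := ENNReal.inv_mul_cancel (by simp) (by simp)

lemma exists_injective_encard_inCube_le (hd : 0 < d) (hp : 0 < p) (hGp : Gp d p φ)
    (hφ1 : φ 0 = 1) (hw : Tendsto (morreyWeight d p φ) atTop (nhds 0)) :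
    ∃ x : ℕ → (Fin d → ℤ), Function.Injective x ∧ ∀ j m,
      ENNReal.ofReal (morreyWeight d p φ j) ^ p * {n | inCube d j m (x n)}.encard ≤ 2 := by
  set v : ℕ → ℝ≥0∞ := fun j => ENNReal.ofReal (morreyWeight d p φ j) ^ p
  have hv_anti : Antitone v := fun j k hjk =>
    ENNReal.rpow_le_rpow (ENNReal.ofReal_le_ofReal (hGp.antitone_morreyWeight hjk)) hp.le
  have hv : Tendsto v atTop (nhds 0) := by
    have h := ENNReal.tendsto_ofReal hw
    rw [ENNReal.ofReal_zero] at h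
    have := ((ENNReal.continuous_rpow_const (y := p)).tendsto 0).comp h
    rwa [ENNReal.zero_rpow_of_pos hp] at this
  obtain ⟨J, hJ, hJv⟩ := extraction_forall_of_eventually
    (P := fun n k => v k ≤ ((n : ℝ≥0∞) + 1)⁻¹) fun n => hv.eventually (ge_mem_nhds (by simp))
  refine ⟨fun n _ => 2 ^ J n, fun a b hab => hJ.injective <|
    by simpa using congrFun hab ⟨0, hd⟩, fun j m => ?_⟩
  set T := (Finset.range j).filter fun n => J n < j
  have hsub : {n | inCube d j m fun _ => 2 ^ J n} ⊆
      ↑T ∪ J ⁻¹' {i | j ≤ i ∧ inCube d j m fun _ => 2 ^ i} := by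
    intro n hn
    by_cases hnj : J n < j
    · exact Or.inl (Finset.mem_filter.2 ⟨Finset.mem_range.2 ((hJ.id_le n).trans_lt hnj), hnj⟩)
    · exact Or.inr ⟨not_lt.1 hnj, hn⟩
  have hcard : ({n | inCube d j m fun _ => 2 ^ J n}.encard : ℝ≥0∞) ≤ T.card + 1 := by
    have hpre := (setOf_inCube_two_pow_subsingleton hd j m).preimage hJ.injective
    have : {n | inCube d j m fun _ => 2 ^ J n}.encard ≤ T.card + 1 :=
      (Set.encard_le_encard hsub).trans <| (Set.encard_union_le _ _).trans <|
        add_le_add (by simp) (Set.encard_le_one_iff_subsingleton.2 hpre)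
    exact_mod_cast this
  have hv1 : v j ≤ 1 := ENNReal.rpow_le_one
    (ENNReal.ofReal_le_one.2 (hGp.morreyWeight_le_one hφ1 j)) hp.le
  calc v j * {n | inCube d j m fun _ => 2 ^ J n}.encard ≤ v j * (T.card + 1) := by gcongr
    _ = v j * T.card + v j := by ring
    _ ≤ 1 + 1 := add_le_add (hv_anti.mul_card_filter_lt_le_one hJv j) hv1
    _ = 2 := one_add_one_eq_two

lemma exists_injective_mNorm_indicator_range_lt_top (hd : 0 < d) (hp : 0 < p) (hGp : Gp d p φ)
    (hφ1 : φ 0 = 1) (hw : Tendsto (morreyWeight d p φ) atTop (nhds 0)) :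
    ∃ x : ℕ → (Fin d → ℤ), Function.Injective x ∧
      mNorm d p φ ((Set.range x).indicator 1) < ⊤ := by
  obtain ⟨x, hx, hcount⟩ := exists_injective_encard_inCube_le hd hp hGp hφ1 hw
  refine ⟨x, hx, lt_of_le_of_lt ?_ (ENNReal.rpow_lt_top_of_nonneg (one_div_nonneg.2 hp.le)
    (by norm_num : (2 : ℝ≥0∞) ≠ ⊤))⟩
  rw [mNorm_eq_iSup_morreyWeight hGp]
  refine iSup₂_le fun j m => ?_
  rw [localSum_indicator_one hp, ← Set.image_preimage_eq_range_inter, hx.encard_image]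
  calc ENNReal.ofReal (morreyWeight d p φ j) *
        ((x ⁻¹' {k | inCube d j m k}).encard : ℝ≥0∞) ^ (1 / p)
      = (ENNReal.ofReal (morreyWeight d p φ j) ^ p *
          (x ⁻¹' {k | inCube d j m k}).encard) ^ (1 / p) := by
        rw [ENNReal.mul_rpow_of_nonneg _ _ (one_div_nonneg.2 hp.le), one_div,
          ENNReal.rpow_rpow_inv hp.ne']
    _ ≤ 2 ^ (1 / p) := by gcongr; exact hcount j m

lemma exists_not_countable_separated (hd : 0 < d) (hp : 0 < p) (hGp : Gp d p φ)
    (hφ1 : φ 0 = 1) (hw : Tendsto (morreyWeight d p φ) atTop (nhds 0)) :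
    ∃ F : Set ((Fin d → ℤ) → ℂ), ¬ F.Countable ∧ (∀ lam ∈ F, mNorm d p φ lam < ⊤) ∧
      F.Pairwise fun lam mu => 1 ≤ linftyNorm d (lam - mu) := by
  obtain ⟨x, hx, hfin⟩ := exists_injective_mNorm_indicator_range_lt_top hd hp hGp hφ1 hw
  have hinj : Function.Injective fun A : Set ℕ => (x '' A).indicator (1 : (Fin d → ℤ) → ℂ) :=
    fun A B h => Set.image_injective.2 hx (Set.indicator_one_inj ℂ h)
  refine ⟨Set.range fun A : Set ℕ => (x '' A).indicator 1, fun h => ?_, ?_, ?_⟩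
  · have : Countable (Set ℕ) := Set.countable_univ_iff.1 <|
      Set.MapsTo.countable_of_injOn (fun A _ => Set.mem_range_self A) hinj.injOn h
    obtain ⟨f, hf⟩ := Countable.exists_injective_nat (Set ℕ)
    exact Function.cantor_injective f hf
  · rintro _ ⟨A, rfl⟩
    exact (mNorm_mono hp.le fun k =>
      norm_indicator_le_of_subset (Set.image_subset_range x A) _ k).trans_lt hfin
  · rintro _ ⟨A, rfl⟩ _ ⟨B, rfl⟩ hAB
    exact one_le_linftyNorm_indicator_sub fun h => hAB (by rw [Set.image_injective.2 hx h])

end SparseSets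

theorem stmt_11_general (d : ℕ) (hd : 0 < d) (p : ℝ) (hp : 0 < p)
    (φ : ℕ → ℝ) (hGp : Gp d p φ) (hφ1 : φ 0 = 1) :
    ((∃ S : Set ((Fin d → ℤ) → ℂ), S.Countable ∧
        ∀ lam : (Fin d → ℤ) → ℂ, mNorm d p φ lam < ⊤ →
          ∀ ε : ℝ≥0∞, 0 < ε → ∃ s ∈ S, mNorm d p φ (lam - s) < ε) ↔
      (∃ c : ℝ, 0 < c ∧ ∀ k : ℕ, c ≤ φ k * (2 : ℝ) ^ (-((k : ℝ) * d) / p))) ∧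
    (Tendsto (fun k : ℕ => φ k * (2 : ℝ) ^ (-((k : ℝ) * d) / p))
        atTop (nhds 0) →
      ∃ F : Set ((Fin d → ℤ) → ℂ), ¬ F.Countable ∧
        (∀ lam ∈ F, mNorm d p φ lam < ⊤) ∧
        ∀ lam ∈ F, ∀ mu ∈ F, lam ≠ mu → 1 ≤ mNorm d p φ (lam - mu)) := by
  have hsep_iff : MorreySeparable d p φ ↔ ∃ c, 0 < c ∧ ∀ k, c ≤ morreyWeight d p φ k := by
    refine ⟨fun hsep => ?_, fun ⟨c, hc, hcw⟩ =>
      morreySeparable_of_le_morreyWeight hp hGp hφ1 hc hcw⟩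
    refine (hGp.antitone_morreyWeight.exists_pos_le_or_tendsto_zero
      fun k => (hGp.morreyWeight_pos k).le).resolve_right fun hw => ?_
    obtain ⟨F, hF, hfin, hsep'⟩ := exists_not_countable_separated hd hp hGp hφ1 hw
    exact not_morreySeparable_of_separated hp.ne' hφ1 hF hfin hsep' hsep
  refine ⟨hsep_iff, fun hw => ?_⟩
  obtain ⟨F, hF, hfin, hsep⟩ := exists_not_countable_separated hd hp hGp hφ1 hw
  exact ⟨F, hF, hfin, fun lam hlam mu hmu hne =>
    (hsep hlam hmu hne).trans (linftyNorm_le_mNorm hp.ne' hφ1 _)⟩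

theorem stmt_11 (d : ℕ) (hd : 0 < d) (p : ℝ) (hp : 0 < p)
    (φ : ℕ → ℝ) (hGp : Gp d p φ) (hφ1 : φ 0 = 1)
    (hunb : ∀ C : ℝ, ∃ k, C < φ k) :
    ((∃ S : Set ((Fin d → ℤ) → ℂ), S.Countable ∧
        ∀ lam : (Fin d → ℤ) → ℂ, mNorm d p φ lam < ⊤ →
          ∀ ε : ℝ≥0∞, 0 < ε → ∃ s ∈ S, mNorm d p φ (lam - s) < ε) ↔
      (∃ c : ℝ, 0 < c ∧ ∀ k : ℕ, c ≤ φ k * (2 : ℝ) ^ (-((k : ℝ) * d) / p))) ∧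
    (Tendsto (fun k : ℕ => φ k * (2 : ℝ) ^ (-((k : ℝ) * d) / p))
        atTop (nhds 0) →
      ∃ F : Set ((Fin d → ℤ) → ℂ), ¬ F.Countable ∧
        (∀ lam ∈ F, mNorm d p φ lam < ⊤) ∧
        ∀ lam ∈ F, ∀ mu ∈ F, lam ≠ mu → 1 ≤ mNorm d p φ (lam - mu)) :=
  stmt_11_general d hd p hp φ hGp hφ1
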